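/- Moyal expansion for cubic potentials: if V(x) = ax³ + bx² + cx + d, then for any f that is three times differentiable in k, Θ_V[f](x,k) = (1/ħ) V'(x) ∂_k f(x,k) − (1/(4ħ·3!)) V'''(x) ∂_k³ f(x,k) (with V''' = 6a), where Θ_V[f] is the y-integral form of the pseudo-differential term and f(x,·) is a Schwartz function. -/

import Mathlib

/-!
For a cubic `V`, `V(x + y/2) - V(x - y/2) = V'(x) y + V'''(x) y³/24` exactly, so `Θ_V[f]` is a
combination of the moments `∫ e^{-iky} yⁿ F(y) dy`, where `F(y) = ∫ e^{ik'y} f(x,k') dk'`. The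
substitution `y = -2πξ` turns `F` into the Fourier transform `𝓕f(ξ)` and `yⁿ` into
`iⁿ (2πiξ)ⁿ`, the Fourier multiplier of `∂ₖⁿ`; Fourier inversion on Schwartz space then
evaluates the moment as `2π iⁿ ∂ₖⁿ f(x,k)`.
-/

open MeasureTheory

/-- The pseudo-differential term Θ_V[f] in its original y-integral form. -/
noncomputable def Theta (hbar : ℝ) (V : ℝ → ℝ) (f : ℝ → ℝ → ℂ) (x k : ℝ) : ℂ :=
  (1 / (2 * Real.pi * Complex.I * hbar)) *
    ∫ y : ℝ, Complex.exp (-Complex.I * k * y) *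
      ((V (x + y / 2) - V (x - y / 2) : ℝ) : ℂ) *
      ∫ k' : ℝ, Complex.exp (Complex.I * k' * y) * f x k'

open Complex FourierTransform
open scoped Real SchwartzMap

namespace SchwartzMap

variable {E : Type*} [NormedAddCommGroup E] [NormedSpace ℂ E]

theorem coe_iterate_derivCLM (g : 𝓢(ℝ, E)) (n : ℕ) :
    ⇑((derivCLM ℝ E)^[n] g) = iteratedDeriv n g := by
  induction n with
  | zero => simp
  | succ n ih =>
    rw [iteratedDeriv_succ, ← ih, Function.iterate_succ_apply']
    rfl

theorem fourier_iteratedDeriv (g : 𝓢(ℝ, E)) (n : ℕ) :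
    𝓕 (iteratedDeriv n g) = fun ξ : ℝ ↦ (2 * π * I * ξ) ^ n • 𝓕 (g : ℝ → E) ξ :=
  Real.fourier_iteratedDeriv (N := ⊤) (g.smooth ⊤)
    (fun m _ ↦ coe_iterate_derivCLM g m ▸ ((derivCLM ℝ E)^[m] g).integrable) le_top

theorem integrable_pow_smul_fourier (g : 𝓢(ℝ, E)) (n : ℕ) :
    Integrable fun ξ : ℝ ↦ (2 * π * I * ξ) ^ n • 𝓕 (g : ℝ → E) ξ := by
  rw [← fourier_iteratedDeriv, ← coe_iterate_derivCLM]
  exact (𝓕 ((derivCLM ℝ E)^[n] g)).integrable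

variable [CompleteSpace E]

theorem fourierInv_pow_smul_fourier (g : 𝓢(ℝ, E)) (n : ℕ) :
    𝓕⁻ (fun ξ : ℝ ↦ (2 * π * I * ξ) ^ n • 𝓕 (g : ℝ → E) ξ) = iteratedDeriv n g := by
  rw [← fourier_iteratedDeriv, ← coe_iterate_derivCLM, ← fourier_coe, ← fourierInv_coe,
    fourierInv_fourier_eq]

end SchwartzMap

/-- The integrand of `Theta` with `V (x + y / 2) - V (x - y / 2)` replaced by `yⁿ`. -/
noncomputable def monomialIntegrand (g : ℝ → ℂ) (k : ℝ) (n : ℕ) (y : ℝ) : ℂ :=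
  exp (-I * k * y) * (y : ℂ) ^ n * ∫ k' : ℝ, exp (I * k' * y) * g k'

theorem integral_exp_mul_eq_fourier (g : ℝ → ℂ) (y : ℝ) :
    ∫ k' : ℝ, exp (I * k' * y) * g k' = 𝓕 g (-(y / (2 * π))) := by
  rw [Real.fourier_eq']
  congr 1 with k'
  simp only [RCLike.inner_apply, conj_trivial, smul_eq_mul]
  push_cast
  field_simp

theorem monomialIntegrand_eq_comp (g : ℝ → ℂ) (k : ℝ) (n : ℕ) :
    monomialIntegrand g k n = fun y ↦ I ^ n * (fun ξ : ℝ ↦ exp (↑(2 * π * inner ℝ ξ k) * I) •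
      ((2 * π * I * ξ) ^ n • 𝓕 g ξ)) (-(2 * π)⁻¹ * y) := by
  ext y
  rw [monomialIntegrand, integral_exp_mul_eq_fourier]
  simp only [RCLike.inner_apply, conj_trivial, smul_eq_mul]
  rw [show -(y / (2 * π)) = -(2 * π)⁻¹ * y by ring]
  have hexp : 2 * (π : ℂ) * ((k : ℂ) * (-(2 * (π : ℂ))⁻¹ * (y : ℂ))) * I = -I * k * y := by
    field_simp
  have hpow : 2 * (π : ℂ) * I * (-(2 * (π : ℂ))⁻¹ * (y : ℂ)) = -I * y := by field_simp
  have hunit : I ^ n * (-I) ^ n = 1 := by rw [← mul_pow]; simp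
  push_cast
  rw [hexp, hpow, mul_pow]
  linear_combination (-exp (-I * k * y) * y ^ n * 𝓕 g (-(2 * π)⁻¹ * y)) * hunit

theorem integrable_monomialIntegrand (g : 𝓢(ℝ, ℂ)) (k : ℝ) (n : ℕ) :
    Integrable (monomialIntegrand g k n) := by
  rw [monomialIntegrand_eq_comp]
  set Φ := fun ξ : ℝ ↦
    exp (↑(2 * π * inner ℝ ξ k) * I) • ((2 * π * I * ξ) ^ n • 𝓕 (g : ℝ → ℂ) ξ)
  have hΦ : Integrable Φ := (g.integrable_pow_smul_fourier n).bdd_mul (c := 1) (by fun_prop)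
    (.of_forall fun ξ ↦ (norm_exp_ofReal_mul_I _).le)
  exact (hΦ.comp_mul_left' (by simp [Real.pi_ne_zero])).const_mul _

theorem integral_monomialIntegrand (g : 𝓢(ℝ, ℂ)) (k : ℝ) (n : ℕ) :
    ∫ y, monomialIntegrand g k n y = 2 * π * I ^ n * iteratedDeriv n g k := by
  rw [monomialIntegrand_eq_comp]
  set Φ := fun ξ : ℝ ↦
    exp (↑(2 * π * inner ℝ ξ k) * I) • ((2 * π * I * ξ) ^ n • 𝓕 (g : ℝ → ℂ) ξ)
  rw [integral_const_mul, Measure.integral_comp_mul_left Φ, ← g.fourierInv_pow_smul_fourier,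
    Real.fourierInv_eq', inv_neg, inv_inv, abs_neg, abs_of_pos Real.two_pi_pos, Complex.real_smul,
    ofReal_mul, ofReal_ofNat]
  ring

theorem stmt6_general (hbar : ℝ) (a b c d : ℝ)
    (f : ℝ → SchwartzMap ℝ ℂ) (x k : ℝ) :
    Theta hbar (fun t => a * t ^ 3 + b * t ^ 2 + c * t + d) (fun x k => f x k) x k =
      (1 / hbar : ℂ) * ((3 * a * x ^ 2 + 2 * b * x + c : ℝ) : ℂ) *
          deriv (fun k' => f x k') k
      - (1 / (4 * hbar * 6) : ℂ) * ((6 * a : ℝ) : ℂ) *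
          iteratedDeriv 3 (fun k' => f x k') k := by
  set V' := 3 * a * x ^ 2 + 2 * b * x + c
  have hD : ∀ y : ℝ, exp (-I * k * y) *
      (((a * (x + y / 2) ^ 3 + b * (x + y / 2) ^ 2 + c * (x + y / 2) + d) -
        (a * (x - y / 2) ^ 3 + b * (x - y / 2) ^ 2 + c * (x - y / 2) + d) : ℝ) : ℂ) *
      ∫ k' : ℝ, exp (I * k' * y) * f x k' =
      V' * monomialIntegrand (f x) k 1 y + (a / 4 : ℂ) * monomialIntegrand (f x) k 3 y := by
    intro y
    simp only [monomialIntegrand, V']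
    push_cast
    ring
  simp only [Theta, hD]
  rw [integral_add ((integrable_monomialIntegrand _ k 1).const_mul _)
      ((integrable_monomialIntegrand _ k 3).const_mul _), integral_const_mul, integral_const_mul,
    integral_monomialIntegrand, integral_monomialIntegrand, iteratedDeriv_one]
  field_simp
  rw [I_sq]
  push_cast
  ring

/-- Moyal expansion for cubic potentials `V(x) = ax³ + bx² + cx + d`:
`Θ_V[f] = (1/ħ) V'(x) ∂_k f − (1/(4ħ·3!)) V'''(x) ∂_k³ f`. -/
theorem stmt6 (hbar : ℝ) (hhbar : 0 < hbar) (a b c d : ℝ)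
    (f : ℝ → SchwartzMap ℝ ℂ) (x k : ℝ) :
    Theta hbar (fun t => a * t ^ 3 + b * t ^ 2 + c * t + d) (fun x k => f x k) x k =
      (1 / hbar : ℂ) * ((3 * a * x ^ 2 + 2 * b * x + c : ℝ) : ℂ) *
          deriv (fun k' => f x k') k
      - (1 / (4 * hbar * 6) : ℂ) * ((6 * a : ℝ) : ℂ) *
          iteratedDeriv 3 (fun k' => f x k') k :=
  stmt6_general hbar a b c d f x k
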